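/- Let g₁, g₂, g₃ ∈ Homeo₊(ℝ) and h : (-∞,p] → (-∞,h(p)] a partial solution of the equation X g₁ X g₂ X g₃ = id. If there exist i, j ∈ {1,2,3} with g_i(e_h) ≠ g_j(e_h), then h extends to a partial solution h' defined on (-∞, p+ε] for some ε > 0. -/

import Mathlib

open Set

/-- `h` is a partial solution of the equation (E) `X g₁ X g₂ X g₃ = id` on the
domain `(-∞, p]`: an increasing homeomorphism of `(-∞, p]` onto a lower set
(of the form `(-∞, h(p)]`), satisfying the equation wherever the composition is
defined. -/
def IsPartialSolution (g₁ g₂ g₃ : ℝ ≃o ℝ) (p : ℝ) (h : ℝ → ℝ) : Prop :=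
  StrictMonoOn h (Iic p) ∧ IsLowerSet (h '' Iic p) ∧
  ∀ x : ℝ, g₃ x ≤ p → g₂ (h (g₃ x)) ≤ p → g₁ (h (g₂ (h (g₃ x)))) ≤ p →
    h (g₁ (h (g₂ (h (g₃ x))))) = x

/-- The domain of the composition `h g₁ h g₂ h g₃`, an interval `(-∞, e_h]`. -/
def compDomain (g₁ g₂ g₃ : ℝ ≃o ℝ) (p : ℝ) (h : ℝ → ℝ) : Set ℝ :=
  {x | g₃ x ≤ p ∧ g₂ (h (g₃ x)) ≤ p ∧ g₁ (h (g₂ (h (g₃ x)))) ≤ p}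

/-!
Extend `h` to an order automorphism `E` of `ℝ`. At `e_h` some of the three constraints defining
the domain of `h g₁ h g₂ h g₃` are equalities (otherwise the domain would reach beyond `e_h`),
and not all three are, since that would force `g₁(e_h) = g₂(e_h) = g₃(e_h) = p`. Just beyond
`e_h` exactly these binding constraints fail, so the extension `h'` beyond `p` enters the
equation only at the binding slots. With one binding slot the equation determines `h' = W⁻¹`
for a word `W` in `E` and the `gᵢ`; with two it becomes `ψ ∘ ψ = Ψ` for a conjugate `ψ` of `h'`
and an order automorphism `Ψ` fixing `p`. Every order automorphism of `ℝ` has a square root: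
on each component of the complement of its fixed points it is conjugate to the unit
translation, and one takes the half translation there.
-/

namespace OrderIso

def SameComponent (Φ : ℝ ≃o ℝ) (x y : ℝ) : Prop := ∀ z ∈ uIcc x y, Φ z ≠ z

section SameComponent

variable {Φ : ℝ ≃o ℝ} {x y z : ℝ}

lemma sameComponent_self (hx : Φ x ≠ x) : SameComponent Φ x x := by
  simpa [SameComponent] using hx

lemma SameComponent.symm (h : SameComponent Φ x y) : SameComponent Φ y x :=
  fun z hz => h z (uIcc_comm x y ▸ hz)

lemma SameComponent.trans (h₁ : SameComponent Φ x y) (h₂ : SameComponent Φ y z) :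
    SameComponent Φ x z :=
  fun w hw => (uIcc_subset_uIcc_union_uIcc hw).elim (h₁ w) (h₂ w)

lemma SameComponent.apply_ne (h : SameComponent Φ x y) : Φ x ≠ x :=
  h x left_mem_uIcc

lemma SameComponent.lt_of_lt_of_apply_eq (h : SameComponent Φ x y) (hz : Φ z = z) (hxz : x < z) :
    y < z := by
  by_contra! hy
  exact h z (mem_uIcc.2 (Or.inl ⟨hxz.le, hy⟩)) hz

lemma SameComponent.lt_of_gt_of_apply_eq (h : SameComponent Φ x y) (hz : Φ z = z) (hzx : z < x) :
    z < y := by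
  by_contra! hy
  exact h z (mem_uIcc.2 (Or.inr ⟨hy, hzx.le⟩)) hz

end SameComponent

section OrbitChart

variable {Λ : ℝ ≃o ℝ} {m : ℝ}

lemma zpow_apply_eq_self {z : ℝ} (hz : Λ z = z) (n : ℤ) : (Λ ^ n) z = z := by
  induction n using Int.induction_on with
  | zero => rfl
  | succ k ih => rw [zpow_add_one, RelIso.mul_apply, hz, ih]
  | pred k ih =>
    calc (Λ ^ (-(k : ℤ) - 1)) z = (Λ ^ (-(k : ℤ))) (Λ⁻¹ (Λ z)) := by
          rw [hz, zpow_sub_one, RelIso.mul_apply]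
      _ = z := by rw [RelIso.inv_apply_self, ih]

lemma zpow_add_one_apply (n : ℤ) (x : ℝ) : (Λ ^ (n + 1)) x = Λ ((Λ ^ n) x) := by
  rw [zpow_add_one, ← (Commute.self_zpow Λ n).eq]
  rfl

lemma strictMono_orbit (hm : m < Λ m) : StrictMono fun n : ℤ => (Λ ^ n) m :=
  strictMono_int_of_lt_succ fun n => by
    simpa only [zpow_add_one, RelIso.mul_apply] using (Λ ^ n).strictMono hm

/-- For `m < Λ m`, a chart of the component of `m` in the complement of the fixed points of `Λ`,
in which `Λ` becomes `t ↦ t + 1`: the fundamental domain `[m, Λ m)` is parametrised affinely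
by `[0, 1)`. -/
noncomputable def orbitChart (Λ : ℝ ≃o ℝ) (m t : ℝ) : ℝ :=
  (Λ ^ ⌊t⌋) (m + Int.fract t * (Λ m - m))

lemma orbitChart_add_one (t : ℝ) : orbitChart Λ m (t + 1) = Λ (orbitChart Λ m t) := by
  rw [orbitChart, orbitChart, Int.floor_add_one, Int.fract_add_one, zpow_add_one_apply]

lemma orbitChart_mem_Ico (hm : m < Λ m) (t : ℝ) :
    orbitChart Λ m t ∈ Ico ((Λ ^ ⌊t⌋) m) ((Λ ^ (⌊t⌋ + 1)) m) := by
  have h0 := Int.fract_nonneg t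
  have h1 := Int.fract_lt_one t
  rw [zpow_add_one, RelIso.mul_apply]
  constructor
  · exact (Λ ^ ⌊t⌋).monotone (by nlinarith)
  · exact (Λ ^ ⌊t⌋).strictMono (by nlinarith)

lemma orbitChart_strictMono (hm : m < Λ m) : StrictMono (orbitChart Λ m) := by
  intro s t hst
  rcases (Int.floor_mono hst.le).eq_or_lt with hfl | hfl
  · have hfr : Int.fract s < Int.fract t := by
      rw [Int.fract, Int.fract, hfl]; linarith
    rw [orbitChart, orbitChart, hfl]
    exact (Λ ^ ⌊t⌋).strictMono (by nlinarith)
  · calc orbitChart Λ m s < (Λ ^ (⌊s⌋ + 1)) m := (orbitChart_mem_Ico hm s).2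
      _ ≤ (Λ ^ ⌊t⌋) m := (strictMono_orbit hm).monotone hfl
      _ ≤ orbitChart Λ m t := (orbitChart_mem_Ico hm t).1

lemma sameComponent_orbitChart (hm : m < Λ m) (t : ℝ) : SameComponent Λ m (orbitChart Λ m t) := by
  intro z hz hfix
  have hcmp : ∀ n : ℤ, (z < (Λ ^ n) m ↔ z < m) ∧ ((Λ ^ n) m < z ↔ m < z) := fun n => by
    have h₁ := (Λ ^ n).lt_iff_lt (x := z) (y := m)
    have h₂ := (Λ ^ n).lt_iff_lt (x := m) (y := z)
    rw [zpow_apply_eq_self hfix] at h₁ h₂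
    exact ⟨h₁, h₂⟩
  have hc := orbitChart_mem_Ico hm t
  rcases (show z ≠ m from fun h => hm.ne' (h ▸ hfix)).lt_or_gt with hzm | hmz
  · have := ((hcmp ⌊t⌋).1.2 hzm).trans_le hc.1
    rcases mem_uIcc.1 hz with h | h <;> linarith
  · have := hc.2.trans ((hcmp (⌊t⌋ + 1)).2.2 hmz)
    rcases mem_uIcc.1 hz with h | h <;> linarith

/-- An infimum or supremum of the orbit inside the component would be a fixed point. -/
lemma exists_orbit_mem_Ico (hm : m < Λ m) {y : ℝ} (hy : SameComponent Λ m y) :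
    ∃ n : ℤ, y ∈ Ico ((Λ ^ n) m) ((Λ ^ (n + 1)) m) := by
  set o : ℤ → ℝ := fun n => (Λ ^ n) m with ho
  have hshift : (fun n => Λ (o n)) = o ∘ Equiv.addRight (1 : ℤ) := by
    ext n; simp [ho, zpow_add_one_apply]
  have hrange : range (fun n => Λ (o n)) = range o := by
    rw [hshift]; exact (Equiv.addRight (1 : ℤ)).surjective.range_comp o
  have hlow : ∃ n, o n ≤ y := by
    by_contra! H
    have hbdd : BddBelow (range o) := ⟨y, by rintro _ ⟨n, rfl⟩; exact (H n).le⟩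
    refine hy (⨅ n, o n) (mem_uIcc.2 (Or.inr ⟨le_ciInf fun n => (H n).le, ?_⟩)) ?_
    · simpa [ho] using ciInf_le hbdd 0
    · rw [Λ.map_ciInf hbdd]; exact congrArg sInf hrange
  have hup : ∃ n, y < o n := by
    by_contra! H
    have hbdd : BddAbove (range o) := ⟨y, by rintro _ ⟨n, rfl⟩; exact H n⟩
    refine hy (⨆ n, o n) (mem_uIcc.2 (Or.inl ⟨?_, ciSup_le H⟩)) ?_
    · simpa [ho] using le_ciSup hbdd 0
    · rw [Λ.map_ciSup hbdd]; exact congrArg sSup hrange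
  obtain ⟨N, hN⟩ := hup
  obtain ⟨n, hn, hmax⟩ := Int.exists_greatest_of_bdd
    ⟨N, fun k hk => ((strictMono_orbit hm).lt_iff_lt.1 (hk.trans_lt hN)).le⟩ hlow
  exact ⟨n, hn, not_le.1 fun h => by linarith [hmax _ h]⟩

lemma exists_orbitChart_eq (hm : m < Λ m) {y : ℝ} (hy : SameComponent Λ m y) :
    ∃ t, orbitChart Λ m t = y := by
  obtain ⟨n, hn₁, hn₂⟩ := exists_orbit_mem_Ico hm hy
  set w := (Λ ^ n)⁻¹ y with hw
  have hw₁ : m ≤ w := by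
    rw [hw, ← (Λ ^ n).le_iff_le, RelIso.apply_inv_self]; exact hn₁
  have hw₂ : w < Λ m := by
    rw [hw, ← (Λ ^ n).lt_iff_lt, RelIso.apply_inv_self, ← RelIso.mul_apply, ← zpow_add_one]
    exact hn₂
  set f := (w - m) / (Λ m - m) with hf
  have hf01 : f ∈ Ico (0 : ℝ) 1 := by
    constructor
    · exact div_nonneg (by linarith) (by linarith)
    · rw [div_lt_one (by linarith)]; linarith
  refine ⟨n + f, ?_⟩
  rw [orbitChart, Int.floor_intCast_add, Int.fract_intCast_add, Int.floor_eq_zero_iff.2 hf01,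
    Int.fract_eq_self.2 hf01, add_zero, hf, div_mul_cancel₀ _ (by linarith), add_sub_cancel,
    hw, RelIso.apply_inv_self]

end OrbitChart

section Sqrt

variable (Φ : ℝ ≃o ℝ)

-- Chosen from the whole component, hence the same for all of its points.
noncomputable def basePt (x : ℝ) : ℝ := Classical.epsilon (SameComponent Φ x)

noncomputable def dir (x : ℝ) : ℤ := if basePt Φ x < Φ (basePt Φ x) then 1 else -1

noncomputable def chart (x : ℝ) : ℝ → ℝ := orbitChart (Φ ^ dir Φ x) (basePt Φ x)

noncomputable def coord (x : ℝ) : ℝ := Classical.epsilon fun t => chart Φ x t = x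

/-- In the chart of each component, `Φ` is the translation by `dir = ±1`; its square root is
the translation by `dir / 2`. -/
noncomputable def sqrtFun (x : ℝ) : ℝ :=
  if Φ x = x then x else chart Φ x (coord Φ x + dir Φ x / 2)

variable {Φ} {x y : ℝ}

lemma sameComponent_basePt (hx : Φ x ≠ x) : SameComponent Φ x (basePt Φ x) :=
  Classical.epsilon_spec ⟨x, sameComponent_self hx⟩

lemma SameComponent.basePt_eq (h : SameComponent Φ x y) : basePt Φ y = basePt Φ x := by
  unfold basePt
  congr 1
  ext z
  exact ⟨h.trans, h.symm.trans⟩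

lemma SameComponent.chart_eq (h : SameComponent Φ x y) : chart Φ y = chart Φ x := by
  rw [chart, chart, dir, dir, h.basePt_eq]

lemma SameComponent.dir_eq (h : SameComponent Φ x y) : dir Φ y = dir Φ x := by
  rw [dir, dir, h.basePt_eq]

lemma sameComponent_inv : SameComponent Φ⁻¹ = SameComponent Φ := by
  have : ∀ z, Φ⁻¹ z = z ↔ Φ z = z := fun z => by
    constructor <;> intro h
    · conv_lhs => rw [← h, RelIso.apply_inv_self]
    · conv_lhs => rw [← h, RelIso.inv_apply_self]
  ext x y
  simp only [SameComponent, ne_eq, this]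

lemma sameComponent_zpow_dir : SameComponent (Φ ^ dir Φ x) = SameComponent Φ := by
  unfold dir; split_ifs
  · rw [zpow_one]
  · rw [zpow_neg_one, sameComponent_inv]

lemma basePt_lt_zpow_dir (hx : Φ x ≠ x) : basePt Φ x < (Φ ^ dir Φ x) (basePt Φ x) := by
  have hne := (sameComponent_basePt hx).symm.apply_ne
  unfold dir; split_ifs with h
  · rwa [zpow_one]
  · rw [zpow_neg_one, ← Φ.lt_iff_lt, RelIso.apply_inv_self]
    exact lt_of_le_of_ne (not_lt.1 h) hne

lemma chart_strictMono (hx : Φ x ≠ x) : StrictMono (chart Φ x) :=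
  orbitChart_strictMono (basePt_lt_zpow_dir hx)

lemma chart_add_dir (t : ℝ) : chart Φ x (t + dir Φ x) = Φ (chart Φ x t) := by
  unfold chart; unfold dir; split_ifs
  · rw [zpow_one]; push_cast; exact orbitChart_add_one t
  · have h := orbitChart_add_one (Λ := Φ ^ (-1 : ℤ)) (m := basePt Φ x) (t + -1)
    rw [neg_add_cancel_right] at h
    rw [h, zpow_neg_one, RelIso.apply_inv_self]
    push_cast; rfl

lemma sameComponent_chart (hx : Φ x ≠ x) (t : ℝ) : SameComponent Φ x (chart Φ x t) := by
  refine (sameComponent_basePt hx).trans ?_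
  rw [← sameComponent_zpow_dir (x := x)]
  exact sameComponent_orbitChart (basePt_lt_zpow_dir hx) t

lemma exists_chart_eq (hx : Φ x ≠ x) (hy : SameComponent Φ x y) : ∃ t, chart Φ x t = y := by
  refine exists_orbitChart_eq (basePt_lt_zpow_dir hx) ?_
  rw [sameComponent_zpow_dir]
  exact (sameComponent_basePt hx).symm.trans hy

lemma chart_coord (hx : Φ x ≠ x) : chart Φ x (coord Φ x) = x :=
  Classical.epsilon_spec (exists_chart_eq hx (sameComponent_self hx))

lemma coord_chart (hx : Φ x ≠ x) (t : ℝ) : coord Φ (chart Φ x t) = t := by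
  have hy := sameComponent_chart hx t
  apply (chart_strictMono hx).injective
  have h := chart_coord hy.symm.apply_ne
  rwa [hy.chart_eq] at h

lemma sqrtFun_of_apply_eq (hx : Φ x = x) : sqrtFun Φ x = x := if_pos hx

lemma sqrtFun_chart (hx : Φ x ≠ x) (t : ℝ) :
    sqrtFun Φ (chart Φ x t) = chart Φ x (t + dir Φ x / 2) := by
  have hy := sameComponent_chart hx t
  rw [sqrtFun, if_neg hy.symm.apply_ne, hy.chart_eq, hy.dir_eq, coord_chart hx]

lemma sqrtFun_of_apply_ne (hx : Φ x ≠ x) :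
    sqrtFun Φ x = chart Φ x (coord Φ x + dir Φ x / 2) :=
  if_neg hx

lemma sqrtFun_sqrtFun (x : ℝ) : sqrtFun Φ (sqrtFun Φ x) = Φ x := by
  by_cases hx : Φ x = x
  · rw [sqrtFun_of_apply_eq hx, sqrtFun_of_apply_eq hx, hx]
  · rw [sqrtFun_of_apply_ne hx, sqrtFun_chart hx, add_assoc, add_halves, chart_add_dir, chart_coord hx]

lemma sqrtFun_lt_of_lt_of_apply_eq {z : ℝ} (hz : Φ z = z) (hxz : x < z) : sqrtFun Φ x < z := by
  by_cases hx : Φ x = x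
  · rwa [sqrtFun_of_apply_eq hx]
  · rw [sqrtFun_of_apply_ne hx]
    exact (sameComponent_chart hx _).lt_of_lt_of_apply_eq hz hxz

lemma lt_sqrtFun_of_lt_of_apply_eq {z : ℝ} (hz : Φ z = z) (hzx : z < x) : z < sqrtFun Φ x := by
  by_cases hx : Φ x = x
  · rwa [sqrtFun_of_apply_eq hx]
  · rw [sqrtFun_of_apply_ne hx]
    exact (sameComponent_chart hx _).lt_of_gt_of_apply_eq hz hzx

lemma sqrtFun_strictMono : StrictMono (sqrtFun Φ) := by
  intro x y hxy
  by_cases h : ∃ z ∈ Icc x y, Φ z = z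
  · obtain ⟨z, ⟨hxz, hzy⟩, hz⟩ := h
    rcases hxz.eq_or_lt with rfl | hxz
    · rw [sqrtFun_of_apply_eq hz]
      exact lt_sqrtFun_of_lt_of_apply_eq hz hxy
    · refine (sqrtFun_lt_of_lt_of_apply_eq hz hxz).trans_le ?_
      rcases hzy.eq_or_lt with rfl | hzy
      · rw [sqrtFun_of_apply_eq hz]
      · exact (lt_sqrtFun_of_lt_of_apply_eq hz hzy).le
  · have hxy' : SameComponent Φ x y := fun z hz hfix =>
      h ⟨z, by rwa [uIcc_of_le hxy.le] at hz, hfix⟩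
    have hx := hxy'.apply_ne
    obtain ⟨t, rfl⟩ := exists_chart_eq hx hxy'
    have hlt : coord Φ x < t := by
      rw [← (chart_strictMono hx).lt_iff_lt, chart_coord hx]; exact hxy
    rw [sqrtFun_of_apply_ne hx, sqrtFun_chart hx]
    exact chart_strictMono hx (by linarith)

lemma sqrtFun_surjective : Function.Surjective (sqrtFun Φ) := by
  intro y
  by_cases hy : Φ y = y
  · exact ⟨y, sqrtFun_of_apply_eq hy⟩
  · exact ⟨chart Φ y (coord Φ y - dir Φ y / 2), by
      rw [sqrtFun_chart hy, sub_add_cancel, chart_coord hy]⟩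

end Sqrt

theorem exists_sqrt (Φ : ℝ ≃o ℝ) : ∃ ψ : ℝ ≃o ℝ, ∀ x, ψ (ψ x) = Φ x :=
  ⟨StrictMono.orderIsoOfSurjective _ sqrtFun_strictMono sqrtFun_surjective, sqrtFun_sqrtFun⟩

end OrderIso

lemma Monotone.apply_eq_self_of_apply_apply_eq_self {α : Type*} [LinearOrder α] {f : α → α}
    (hf : Monotone f) {p : α} (h : f (f p) = p) : f p = p :=
  (Function.Commute.id_right.iterate_pos_eq_iff_map_eq hf strictMono_id two_pos).1 h

lemma exists_orderIso_eqOn_Iic {α : Type*} [LinearOrder α] {f : α → α} {p : α}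
    (hf : StrictMonoOn f (Iic p)) (hf' : IsLowerSet (f '' Iic p)) (g : α ≃o α) (hg : g p = f p) :
    ∃ G : α ≃o α, EqOn G f (Iic p) ∧ EqOn G g (Ioi p) := by
  classical
  set G := (Iic p).piecewise f g
  have hGf : EqOn G f (Iic p) := fun x hx => piecewise_eq_of_mem (Iic p) f g hx
  have hGg : EqOn G g (Ioi p) := fun x hx => piecewise_eq_of_notMem (Iic p) f g (not_le.2 hx)
  have hmono : StrictMono G := by
    intro x y hxy
    rcases le_or_gt y p with hy | hy
    · rw [hGf hy, hGf (hxy.le.trans hy)]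
      exact hf (hxy.le.trans hy) hy hxy
    rw [hGg hy]
    rcases le_or_gt x p with hx | hx
    · rw [hGf hx]
      exact (hf.monotoneOn hx le_rfl hx).trans_lt (hg ▸ g.strictMono hy)
    · rw [hGg hx]
      exact g.strictMono hxy
  have hsurj : Function.Surjective G := by
    intro y
    rcases le_or_gt y (f p) with hy | hy
    · obtain ⟨x, hx, rfl⟩ := hf' hy ⟨p, le_rfl, rfl⟩
      exact ⟨x, hGf hx⟩
    · refine ⟨g.symm y, (hGg ?_).trans (g.apply_symm_apply y)⟩
      rwa [mem_Ioi, g.lt_symm_apply, hg]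
  exact ⟨StrictMono.orderIsoOfSurjective G hmono hsurj, hGf, hGg⟩

section PartialSolution

variable {g₁ g₂ g₃ : ℝ ≃o ℝ} {p : ℝ}

lemma compDomain_congr {f f' : ℝ → ℝ} (h : EqOn f f' (Iic p)) :
    compDomain g₁ g₂ g₃ p f = compDomain g₁ g₂ g₃ p f' := by
  ext x
  constructor <;> rintro ⟨h₃, h₂, h₁⟩
  · rw [h h₃] at h₂ h₁; rw [h h₂] at h₁; exact ⟨h₃, h₂, h₁⟩
  · rw [← h h₃] at h₂ h₁; rw [← h h₂] at h₁; exact ⟨h₃, h₂, h₁⟩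

lemma apply_comp_congr {f f' : ℝ → ℝ} (h : EqOn f f' (Iic p)) {x : ℝ}
    (hx : x ∈ compDomain g₁ g₂ g₃ p f) :
    f (g₁ (f (g₂ (f (g₃ x))))) = f' (g₁ (f' (g₂ (f' (g₃ x))))) := by
  obtain ⟨h₃, h₂, h₁⟩ := hx
  rw [h h₁, h h₂, h h₃]

lemma isPartialSolution_of_orderIso {G : ℝ ≃o ℝ}
    (h : ∀ x ∈ compDomain g₁ g₂ g₃ p G, G (g₁ (G (g₂ (G (g₃ x))))) = x) :
    IsPartialSolution g₁ g₂ g₃ p G :=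
  ⟨G.strictMono.strictMonoOn _, by rw [G.image_Iic]; exact isLowerSet_Iic _,
    fun x h₃ h₂ h₁ => h x ⟨h₃, h₂, h₁⟩⟩

end PartialSolution

-- `F` is the continuation of `E` beyond `p`; up to `e` the equation already holds for `E`.
def ContinuesBeyond (g₁ g₂ g₃ E : ℝ ≃o ℝ) (p e : ℝ) : Prop :=
  ∃ ε > 0, ∃ F : ℝ ≃o ℝ, F p = E p ∧ ∀ G : ℝ → ℝ, EqOn G E (Iic p) → EqOn G F (Ioi p) →
    ∀ x ∈ compDomain g₁ g₂ g₃ (p + ε) G ∩ Ioi e, G (g₁ (G (g₂ (G (g₃ x))))) = x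

section Continuation

variable {g₁ g₂ g₃ E : ℝ ≃o ℝ} {p eh : ℝ}

lemma lt_apply_of_eqOn_Ioi {F : ℝ ≃o ℝ} {G : ℝ → ℝ} (hFp : F p = E p) (hGF : EqOn G F (Ioi p))
    {y : ℝ} (hy : p < y) : E p < G y := by
  rw [hGF hy, ← hFp]
  exact F.strictMono hy

-- The `k`-th constraint of `compDomain` binds at `eh` if it holds with equality there.
lemma continuesBeyond_of_binding₃ (heh : E (g₁ (E (g₂ (E (g₃ eh))))) = eh)
    (e₃ : g₃ eh = p) (l₂ : g₂ (E (g₃ eh)) < p) (l₁ : g₁ (E (g₂ (E (g₃ eh)))) < p) :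
    ContinuesBeyond g₁ g₂ g₃ E p eh := by
  rw [e₃] at heh l₂ l₁
  set W := g₂.trans (E.trans (g₁.trans (E.trans g₃)))
  set K := min (E p) (E (g₁ (E p)))
  have hK : eh < K := by
    rw [← heh]
    exact lt_min (E.strictMono l₁) (E.strictMono (g₁.strictMono (E.strictMono l₂)))
  have hε : 0 < g₃ K - p := by
    have := g₃.strictMono hK
    linarith
  refine ⟨g₃ K - p, hε, W.symm, W.symm_apply_eq.2 ?_, ?_⟩
  · change p = g₃ (E (g₁ (E (g₂ (E p)))))
    rw [heh, e₃]
  rintro G hGE hGF x ⟨⟨h₃, -, -⟩, hx⟩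
  have hxK : x ≤ K := g₃.le_iff_le.1 (by linarith)
  rw [hGF (show p < g₃ x from e₃ ▸ g₃.strictMono hx)]
  have hv : E (g₁ (E (g₂ (W.symm (g₃ x))))) = x := g₃.injective (W.apply_symm_apply (g₃ x))
  have c₂ : g₂ (W.symm (g₃ x)) ≤ p := by
    rw [← E.le_iff_le, ← g₁.le_iff_le, ← E.le_iff_le, hv]
    exact hxK.trans (min_le_right _ _)
  have c₁ : g₁ (E (g₂ (W.symm (g₃ x)))) ≤ p := by
    rw [← E.le_iff_le, hv]
    exact hxK.trans (min_le_left _ _)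
  rw [hGE c₂, hGE c₁, hv]

lemma continuesBeyond_of_binding₂ (hdom : compDomain g₁ g₂ g₃ p E ⊆ Iic eh)
    (heh : E (g₁ (E (g₂ (E (g₃ eh))))) = eh)
    (l₃ : g₃ eh < p) (e₂ : g₂ (E (g₃ eh)) = p) (l₁ : g₁ (E (g₂ (E (g₃ eh)))) < p) :
    ContinuesBeyond g₁ g₂ g₃ E p eh := by
  rw [e₂] at heh l₁
  set W := g₁.trans (E.trans (g₃.trans (E.trans g₂)))
  have hehp : eh < E p := heh ▸ E.strictMono l₁
  set B := min (g₂ (E p)) (g₂ (E (g₃ (E p))))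
  have hB : p < B := by
    rw [← e₂]
    exact lt_min (g₂.strictMono (E.strictMono l₃))
      (g₂.strictMono (E.strictMono (g₃.strictMono hehp)))
  have hFp : W.symm p = E p := by
    rw [W.symm_apply_eq]
    change p = g₂ (E (g₃ (E (g₁ (E p)))))
    rw [heh, e₂]
  refine ⟨B - p, by linarith, W.symm, hFp, ?_⟩
  rintro G hGE hGF x ⟨⟨h₃, h₂, -⟩, hx⟩
  have c₃ : g₃ x ≤ p := by
    by_contra! H
    have := g₂.strictMono (lt_apply_of_eqOn_Ioi hFp hGF H)
    linarith [min_le_left (g₂ (E p)) (g₂ (E (g₃ (E p))))]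
  rw [hGE c₃] at h₂ ⊢
  have c₂ : p < g₂ (E (g₃ x)) := by
    by_contra! H
    exact hx.not_ge (mem_Iic.1 <| hdom ⟨c₃, H, (g₁.monotone (E.monotone H)).trans l₁.le⟩)
  rw [hGF c₂]
  have hv : E (g₁ (W.symm (g₂ (E (g₃ x))))) = x :=
    g₃.injective (E.injective (g₂.injective (W.apply_symm_apply _)))
  have c₁ : g₁ (W.symm (g₂ (E (g₃ x)))) ≤ p := by
    rw [← E.le_iff_le, hv, ← g₃.le_iff_le, ← E.le_iff_le, ← g₂.le_iff_le]
    linarith [min_le_right (g₂ (E p)) (g₂ (E (g₃ (E p))))]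
  rw [hGE c₁, hv]

lemma continuesBeyond_of_binding₁ (hdom : compDomain g₁ g₂ g₃ p E ⊆ Iic eh)
    (heh : E (g₁ (E (g₂ (E (g₃ eh))))) = eh)
    (l₃ : g₃ eh < p) (l₂ : g₂ (E (g₃ eh)) < p) (e₁ : g₁ (E (g₂ (E (g₃ eh)))) = p) :
    ContinuesBeyond g₁ g₂ g₃ E p eh := by
  rw [e₁] at heh
  set W := g₃.trans (E.trans (g₂.trans (E.trans g₁)))
  set B := min (g₁ (E p)) (g₁ (E (g₂ (E p))))
  have hB : p < B := by
    rw [← e₁]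
    exact lt_min (g₁.strictMono (E.strictMono l₂))
      (g₁.strictMono (E.strictMono (g₂.strictMono (E.strictMono l₃))))
  have hB₁ := min_le_left (g₁ (E p)) (g₁ (E (g₂ (E p))))
  have hB₂ := min_le_right (g₁ (E p)) (g₁ (E (g₂ (E p))))
  have hFp : W.symm p = E p := by
    rw [W.symm_apply_eq, heh]
    exact e₁.symm
  refine ⟨B - p, by linarith, W.symm, hFp, ?_⟩
  rintro G hGE hGF x ⟨⟨h₃, h₂, h₁⟩, hx⟩
  have c₃ : g₃ x ≤ p := by
    by_contra! H
    have hy₂ := g₂.strictMono (lt_apply_of_eqOn_Ioi hFp hGF H)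
    rcases le_or_gt (g₂ (G (g₃ x))) p with H₂ | H₂
    · rw [hGE H₂] at h₁
      have := g₁.strictMono (E.strictMono hy₂)
      linarith
    · have := g₁.strictMono (lt_apply_of_eqOn_Ioi hFp hGF H₂)
      linarith
  rw [hGE c₃] at h₂ h₁ ⊢
  have c₂ : g₂ (E (g₃ x)) ≤ p := by
    by_contra! H
    have := g₁.strictMono (lt_apply_of_eqOn_Ioi hFp hGF H)
    linarith
  rw [hGE c₂] at h₁ ⊢
  have c₁ : p < g₁ (E (g₂ (E (g₃ x)))) := by
    by_contra! H
    exact hx.not_ge (mem_Iic.1 <| hdom ⟨c₃, c₂, H⟩)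
  rw [hGF c₁]
  exact W.symm_apply_apply x

lemma continuesBeyond_of_binding₂₃ (heh : E (g₁ (E (g₂ (E (g₃ eh))))) = eh)
    (e₃ : g₃ eh = p) (e₂ : g₂ (E (g₃ eh)) = p) (l₁ : g₁ (E (g₂ (E (g₃ eh)))) < p) :
    ContinuesBeyond g₁ g₂ g₃ E p eh := by
  rw [e₂] at heh l₁
  rw [e₃] at e₂
  set Ψ := g₃.symm.trans (E.symm.trans (g₁.symm.trans g₂))
  obtain ⟨ψ, hψ⟩ := OrderIso.exists_sqrt Ψ
  have hψp : ψ p = p := by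
    refine ψ.monotone.apply_eq_self_of_apply_apply_eq_self ((hψ p).trans ?_)
    change g₂ (g₁.symm (E.symm (g₃.symm p))) = p
    rw [g₃.symm_apply_eq.2 e₃.symm, ← heh, E.symm_apply_apply, g₁.symm_apply_apply, e₂]
  have hehp : eh < E p := heh ▸ E.strictMono l₁
  have hε : p < g₃ (E p) := e₃.symm.trans_lt (g₃.strictMono hehp)
  refine ⟨g₃ (E p) - p, by linarith, ψ.trans g₂.symm, ?_, ?_⟩
  · change g₂.symm (ψ p) = E p
    rw [hψp, g₂.symm_apply_eq, e₂]
  rintro G hGE hGF x ⟨⟨h₃, -, -⟩, hx⟩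
  have hxp : x ≤ E p := g₃.le_iff_le.1 (by linarith)
  have c₃ : p < g₃ x := e₃ ▸ g₃.strictMono hx
  have c₂ : p < ψ (g₃ x) := hψp ▸ ψ.strictMono c₃
  have c₁ : E.symm x ≤ p := E.symm_apply_le.2 hxp
  have hΨ : g₁ (g₂.symm (Ψ (g₃ x))) = E.symm x := by
    change g₁ (g₂.symm (g₂ (g₁.symm (E.symm (g₃.symm (g₃ x)))))) = E.symm x
    simp only [OrderIso.symm_apply_apply, OrderIso.apply_symm_apply]
  rw [hGF c₃]
  change G (g₁ (G (g₂ (g₂.symm (ψ (g₃ x)))))) = x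
  rw [g₂.apply_symm_apply, hGF c₂]
  change G (g₁ (g₂.symm (ψ (ψ (g₃ x))))) = x
  rw [hψ, hΨ, hGE c₁, E.apply_symm_apply]

lemma continuesBeyond_of_binding₁₂ (hdom : compDomain g₁ g₂ g₃ p E ⊆ Iic eh)
    (heh : E (g₁ (E (g₂ (E (g₃ eh))))) = eh)
    (l₃ : g₃ eh < p) (e₂ : g₂ (E (g₃ eh)) = p) (e₁ : g₁ (E (g₂ (E (g₃ eh)))) = p) :
    ContinuesBeyond g₁ g₂ g₃ E p eh := by
  rw [e₂] at heh e₁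
  rw [e₁] at heh
  set Ψ := g₂.symm.trans (E.symm.trans (g₃.symm.trans g₁))
  obtain ⟨ψ, hψ⟩ := OrderIso.exists_sqrt Ψ
  have hψp : ψ p = p := by
    refine ψ.monotone.apply_eq_self_of_apply_apply_eq_self ((hψ p).trans ?_)
    change g₁ (g₃.symm (E.symm (g₂.symm p))) = p
    rw [g₂.symm_apply_eq.2 e₂.symm, E.symm_apply_apply, g₃.symm_apply_apply, ← heh, e₁]
  have hFp : (ψ.trans g₁.symm) p = E p := by
    change g₁.symm (ψ p) = E p
    rw [hψp, g₁.symm_apply_eq, e₁]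
  have hε : p < g₂ (E p) := e₂.symm.trans_lt (g₂.strictMono (E.strictMono l₃))
  refine ⟨g₂ (E p) - p, by linarith, ψ.trans g₁.symm, hFp, ?_⟩
  rintro G hGE hGF x ⟨⟨h₃, h₂, -⟩, hx⟩
  have c₃ : g₃ x ≤ p := by
    by_contra! H
    have := g₂.strictMono (lt_apply_of_eqOn_Ioi hFp hGF H)
    linarith
  rw [hGE c₃]
  have c₂ : p < g₂ (E (g₃ x)) := by
    by_contra! H
    exact hx.not_ge (mem_Iic.1 <| hdom ⟨c₃, H, e₁ ▸ g₁.monotone (E.monotone H)⟩)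
  have c₁ : p < ψ (g₂ (E (g₃ x))) := hψp ▸ ψ.strictMono c₂
  rw [hGF c₂]
  change G (g₁ (g₁.symm (ψ (g₂ (E (g₃ x)))))) = x
  rw [g₁.apply_symm_apply, hGF c₁]
  change g₁.symm (ψ (ψ (g₂ (E (g₃ x))))) = x
  rw [hψ]
  change g₁.symm (g₁ (g₃.symm (E.symm (g₂.symm (g₂ (E (g₃ x))))))) = x
  simp only [OrderIso.symm_apply_apply]

lemma continuesBeyond_of_binding₁₃ (heh : E (g₁ (E (g₂ (E (g₃ eh))))) = eh)
    (e₃ : g₃ eh = p) (l₂ : g₂ (E (g₃ eh)) < p) (e₁ : g₁ (E (g₂ (E (g₃ eh)))) = p) :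
    ContinuesBeyond g₁ g₂ g₃ E p eh := by
  rw [e₁] at heh
  rw [e₃] at l₂ e₁
  set W := g₂.trans (E.trans g₁)
  have hW : W (E p) = p := e₁
  set Ψ := g₃.symm.trans W
  obtain ⟨ψ, hψ⟩ := OrderIso.exists_sqrt Ψ
  have hψp : ψ p = p := by
    refine ψ.monotone.apply_eq_self_of_apply_apply_eq_self ((hψ p).trans ?_)
    change W (g₃.symm p) = p
    rw [g₃.symm_apply_eq.2 e₃.symm, ← heh, hW]
  have hFp : (ψ.trans W.symm) p = E p := by
    change W.symm (ψ p) = E p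
    rw [hψp, W.symm_apply_eq, hW]
  have hε : p < g₁ (E p) := e₁.symm.trans_lt (g₁.strictMono (E.strictMono l₂))
  refine ⟨g₁ (E p) - p, by linarith, ψ.trans W.symm, hFp, ?_⟩
  rintro G hGE hGF x ⟨⟨-, -, h₁⟩, hx⟩
  have c₃ : p < g₃ x := e₃ ▸ g₃.strictMono hx
  rw [hGF c₃] at h₁ ⊢
  change G (g₁ (G (g₂ (W.symm (ψ (g₃ x)))))) = x
  change g₁ (G (g₂ (W.symm (ψ (g₃ x))))) ≤ p + (g₁ (E p) - p) at h₁
  have c₂ : g₂ (W.symm (ψ (g₃ x))) ≤ p := by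
    by_contra! H
    have := g₁.strictMono (lt_apply_of_eqOn_Ioi hFp hGF H)
    linarith
  have c₁ : p < ψ (g₃ x) := hψp ▸ ψ.strictMono c₃
  rw [hGE c₂]
  change G (W (W.symm (ψ (g₃ x)))) = x
  rw [W.apply_symm_apply, hGF c₁]
  change W.symm (ψ (ψ (g₃ x))) = x
  rw [hψ]
  change W.symm (W (g₃.symm (g₃ x))) = x
  simp only [OrderIso.symm_apply_apply]

lemma not_all_slack (hdom : compDomain g₁ g₂ g₃ p E ⊆ Iic eh) :
    ¬ (g₃ eh < p ∧ g₂ (E (g₃ eh)) < p ∧ g₁ (E (g₂ (E (g₃ eh)))) < p) := by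
  rintro ⟨l₃, l₂, l₁⟩
  set A₂ := g₃.trans (E.trans g₂)
  set A₁ := A₂.trans (E.trans g₁)
  have hx : eh < min (g₃.symm p) (min (A₂.symm p) (A₁.symm p)) :=
    lt_min (g₃.lt_symm_apply.2 l₃) (lt_min (A₂.lt_symm_apply.2 l₂) (A₁.lt_symm_apply.2 l₁))
  refine hx.not_ge (hdom ⟨g₃.le_symm_apply.1 (min_le_left _ _), ?_, ?_⟩)
  · exact A₂.le_symm_apply.1 ((min_le_right _ _).trans (min_le_left _ _))
  · exact A₁.le_symm_apply.1 ((min_le_right _ _).trans (min_le_right _ _))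

theorem continuesBeyond_of_not_all_binding (hdom : compDomain g₁ g₂ g₃ p E = Iic eh)
    (heh : E (g₁ (E (g₂ (E (g₃ eh))))) = eh)
    (hne : ¬ (g₃ eh = p ∧ g₂ (E (g₃ eh)) = p ∧ g₁ (E (g₂ (E (g₃ eh)))) = p)) :
    ContinuesBeyond g₁ g₂ g₃ E p eh := by
  obtain ⟨h₃, h₂, h₁⟩ : eh ∈ compDomain g₁ g₂ g₃ p E := hdom ▸ self_mem_Iic
  have hsub := hdom.subset
  rcases h₃.eq_or_lt with e₃ | l₃ <;> rcases h₂.eq_or_lt with e₂ | l₂ <;>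
    rcases h₁.eq_or_lt with e₁ | l₁
  · exact absurd ⟨e₃, e₂, e₁⟩ hne
  · exact continuesBeyond_of_binding₂₃ heh e₃ e₂ l₁
  · exact continuesBeyond_of_binding₁₃ heh e₃ l₂ e₁
  · exact continuesBeyond_of_binding₃ heh e₃ l₂ l₁
  · exact continuesBeyond_of_binding₁₂ hsub heh l₃ e₂ e₁
  · exact continuesBeyond_of_binding₂ hsub heh l₃ e₂ l₁
  · exact continuesBeyond_of_binding₁ hsub heh l₃ l₂ e₁
  · exact absurd ⟨l₃, l₂, l₁⟩ (not_all_slack hsub)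

theorem exists_isPartialSolution_of_continuesBeyond (hdom : compDomain g₁ g₂ g₃ p E = Iic eh)
    (hsol : ∀ x ≤ eh, E (g₁ (E (g₂ (E (g₃ x))))) = x) (hc : ContinuesBeyond g₁ g₂ g₃ E p eh) :
    ∃ ε > 0, ∃ G : ℝ ≃o ℝ, EqOn G E (Iic p) ∧ IsPartialSolution g₁ g₂ g₃ (p + ε) G := by
  obtain ⟨ε, hε, F, hFp, hF⟩ := hc
  obtain ⟨G, hGE, hGF⟩ := exists_orderIso_eqOn_Iic (E.strictMono.strictMonoOn _)
    (E.image_Iic p ▸ isLowerSet_Iic _) F hFp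
  refine ⟨ε, hε, G, hGE, isPartialSolution_of_orderIso fun x hx => ?_⟩
  rcases le_or_gt x eh with hxe | hxe
  · have hxG : x ∈ compDomain g₁ g₂ g₃ p G := (compDomain_congr hGE).trans hdom ▸ hxe
    rw [apply_comp_congr hGE hxG]
    exact hsol x hxe
  · exact hF G hGE hGF x ⟨hx, hxe⟩

end Continuation

lemma apply_eq_of_all_binding {g₁ g₂ g₃ E : ℝ ≃o ℝ} {p eh : ℝ}
    (heh : E (g₁ (E (g₂ (E (g₃ eh))))) = eh)
    (e₃ : g₃ eh = p) (e₂ : g₂ (E (g₃ eh)) = p) (e₁ : g₁ (E (g₂ (E (g₃ eh)))) = p) :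
    g₁ eh = p ∧ g₂ eh = p ∧ g₃ eh = p := by
  rw [e₁] at heh
  rw [e₃] at e₂ e₁
  rw [e₂] at e₁
  exact ⟨heh ▸ e₁, heh ▸ e₂, e₃⟩

/-- Lemma: if `h : (-∞,p] → (-∞,h(p)]` is a partial solution of (E) and
`gᵢ(e_h) ≠ gⱼ(e_h)` for some `i,j`, then `h` extends to a partial solution on
`(-∞, p+ε]` for some `ε > 0`. -/
theorem partial_solution_extension (g₁ g₂ g₃ : ℝ ≃o ℝ) (p : ℝ) (h : ℝ → ℝ)
    (hps : IsPartialSolution g₁ g₂ g₃ p h)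
    (eh : ℝ) (heh : compDomain g₁ g₂ g₃ p h = Iic eh)
    (hne : ∃ i j : Fin 3, ![g₁, g₂, g₃] i eh ≠ ![g₁, g₂, g₃] j eh) :
    ∃ ε : ℝ, 0 < ε ∧ ∃ h' : ℝ → ℝ,
      IsPartialSolution g₁ g₂ g₃ (p + ε) h' ∧ ∀ x ≤ p, h' x = h x := by
  obtain ⟨hmono, hlower, hsol⟩ := hps
  obtain ⟨E, hEh, -⟩ := exists_orderIso_eqOn_Iic hmono hlower (OrderIso.addRight (h p - p))
    (by simp)
  have hdom : compDomain g₁ g₂ g₃ p E = Iic eh := (compDomain_congr hEh).trans heh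
  have hsolE : ∀ x ≤ eh, E (g₁ (E (g₂ (E (g₃ x))))) = x := fun x hx => by
    obtain ⟨h₃, h₂, h₁⟩ : x ∈ compDomain g₁ g₂ g₃ p h := heh ▸ hx
    rw [apply_comp_congr hEh (hdom ▸ hx)]
    exact hsol x h₃ h₂ h₁
  have hnot_all : ¬ (g₃ eh = p ∧ g₂ (E (g₃ eh)) = p ∧ g₁ (E (g₂ (E (g₃ eh)))) = p) := by
    rintro ⟨e₃, e₂, e₁⟩
    obtain ⟨h₁, h₂, h₃⟩ := apply_eq_of_all_binding (hsolE eh le_rfl) e₃ e₂ e₁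
    obtain ⟨i, j, hij⟩ := hne
    fin_cases i <;> fin_cases j <;> simp_all
  obtain ⟨ε, hε, G, hGE, hG⟩ := exists_isPartialSolution_of_continuesBeyond hdom hsolE
    (continuesBeyond_of_not_all_binding hdom (hsolE eh le_rfl) hnot_all)
  exact ⟨ε, hε, G, hG, fun x hx => (hGE hx).trans (hEh hx)⟩
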